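/- There exists a constant C > 0 such that for all real numbers a, b ≥ 0 and all ℓ ≥ 1, setting t = cosh(a)·cosh(b)·cosh(ℓ) − sinh(a)·sinh(b), one has t ≥ 1 and | log( t + √(t² − 1) ) − (a + b + ℓ) | ≤ C. -/

import Mathlib

/-!
Writing `t = cosh (a - b) + cosh a cosh b (cosh ℓ - 1)` shows `t ≥ 1`, and since
`e^x / 2 ≤ cosh x ≤ e^x` for `x ≥ 0` and `cosh ℓ - 1 ≥ e^ℓ / 8` for `ℓ ≥ 1`, we get
`e^(a+b+ℓ) / 32 ≤ t ≤ e^(a+b+ℓ)`. Finally `arcosh t = log (t + √(t² - 1))` lies between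
`log t` and `log (2t)`.
-/

open Real

namespace Real

lemma log_le_arcosh {x : ℝ} (hx : 1 ≤ x) : log x ≤ arcosh x :=
  log_le_log (by linarith) (le_add_of_nonneg_right (sqrt_nonneg _))

lemma arcosh_le_log_two_add_log {x : ℝ} (hx : 1 ≤ x) : arcosh x ≤ log 2 + log x := by
  have hsqrt : √(x ^ 2 - 1) ≤ x := sqrt_le_iff.2 ⟨by linarith, by linarith⟩
  rw [← log_mul two_ne_zero (by linarith)]
  exact log_le_log (by positivity) (by linarith)

lemma cosh_le_exp_of_nonneg {x : ℝ} (hx : 0 ≤ x) : cosh x ≤ exp x := by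
  linarith [exp_sub_cosh x, sinh_nonneg_iff.2 hx]

lemma exp_le_two_mul_cosh (x : ℝ) : exp x ≤ 2 * cosh x := by
  linarith [cosh_eq x, exp_pos (-x)]

lemma exp_le_eight_mul_cosh_sub_one {x : ℝ} (hx : 1 ≤ x) : exp x ≤ 8 * (cosh x - 1) := by
  have he : 2.7 < exp x := by linarith [exp_one_gt_d9, exp_le_exp.2 hx]
  linarith [exp_le_two_mul_cosh x]

end Real

/-- `cosh L` for the side `L` opposite to `ℓ` in a quadrilateral with sides `a, ℓ, b` meeting at
two right angles. -/
noncomputable def coshOppositeSide (a b ℓ : ℝ) : ℝ :=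
  cosh a * cosh b * cosh ℓ - sinh a * sinh b

lemma coshOppositeSide_eq (a b ℓ : ℝ) :
    coshOppositeSide a b ℓ = cosh (a - b) + cosh a * cosh b * (cosh ℓ - 1) := by
  rw [coshOppositeSide, cosh_sub]
  ring

lemma one_le_coshOppositeSide (a b ℓ : ℝ) : 1 ≤ coshOppositeSide a b ℓ := by
  rw [coshOppositeSide_eq]
  have : 0 ≤ cosh a * cosh b * (cosh ℓ - 1) := by
    have := one_le_cosh ℓ
    positivity
  linarith [one_le_cosh (a - b)]

lemma coshOppositeSide_le_exp {a b ℓ : ℝ} (ha : 0 ≤ a) (hb : 0 ≤ b) (hℓ : 0 ≤ ℓ) :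
    coshOppositeSide a b ℓ ≤ exp (a + b + ℓ) := by
  have hsinh : 0 ≤ sinh a * sinh b := mul_nonneg (sinh_nonneg_iff.2 ha) (sinh_nonneg_iff.2 hb)
  calc coshOppositeSide a b ℓ ≤ cosh a * cosh b * cosh ℓ := sub_le_self _ hsinh
    _ ≤ exp a * exp b * exp ℓ := by
      gcongr <;> exact cosh_le_exp_of_nonneg ‹_›
    _ = exp (a + b + ℓ) := by rw [exp_add, exp_add]

lemma exp_le_coshOppositeSide {ℓ : ℝ} (a b : ℝ) (hℓ : 1 ≤ ℓ) :
    exp (a + b + ℓ) ≤ 32 * coshOppositeSide a b ℓ := by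
  calc exp (a + b + ℓ) = exp a * exp b * exp ℓ := by rw [exp_add, exp_add]
    _ ≤ (2 * cosh a) * (2 * cosh b) * (8 * (cosh ℓ - 1)) := by
      gcongr
      exacts [exp_le_two_mul_cosh a, exp_le_two_mul_cosh b, exp_le_eight_mul_cosh_sub_one hℓ]
    _ = 32 * (cosh a * cosh b * (cosh ℓ - 1)) := by ring
    _ ≤ 32 * coshOppositeSide a b ℓ := by
      rw [coshOppositeSide_eq]
      linarith [cosh_pos (a - b)]

/-- For a hyperbolic right-angled quadrilateral with sides `a, b, ℓ`, the fourth side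
`L = arccosh t = log (t + √(t² − 1))` with `t = cosh a cosh b cosh ℓ − sinh a sinh b`
satisfies `L = a + b + ℓ + O(1)`, uniformly for `a, b ≥ 0` and `ℓ ≥ 1`. -/
theorem quadrilateral_side_O1 :
    ∃ C > 0, ∀ a b ℓ : ℝ, 0 ≤ a → 0 ≤ b → 1 ≤ ℓ →
      (fun t : ℝ =>
          1 ≤ t ∧ |Real.log (t + Real.sqrt (t ^ 2 - 1)) - (a + b + ℓ)| ≤ C)
        (Real.cosh a * Real.cosh b * Real.cosh ℓ - Real.sinh a * Real.sinh b) := by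
  refine ⟨log 32, log_pos (by norm_num), fun a b ℓ ha hb hℓ => ?_⟩
  change 1 ≤ coshOppositeSide a b ℓ ∧ |arcosh (coshOppositeSide a b ℓ) - (a + b + ℓ)| ≤ log 32
  set t := coshOppositeSide a b ℓ
  have ht : 1 ≤ t := one_le_coshOppositeSide a b ℓ
  have hlog_le : log t ≤ a + b + ℓ :=
    (log_le_iff_le_exp (by linarith)).2 (coshOppositeSide_le_exp ha hb (by linarith))
  have hle_log : a + b + ℓ ≤ log 32 + log t := by
    rw [← log_mul (by norm_num) (by linarith), le_log_iff_exp_le (by linarith)]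
    exact exp_le_coshOppositeSide a b hℓ
  have hlog_two : log 2 ≤ log 32 := log_le_log (by norm_num) (by norm_num)
  have hlog_le_arcosh := log_le_arcosh ht
  have harcosh_le := arcosh_le_log_two_add_log ht
  exact ⟨ht, abs_le.2 ⟨by linarith, by linarith⟩⟩
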